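/- Let A ∈ R^{m×n}, C ∈ R^{m×r}, and let k < r be an integer. Fix ξ ∈ {2, F} and let X^ξ ∈ R^{r×n} be a matrix of rank at most k minimizing ‖A − C Ψ‖_ξ over all Ψ ∈ R^{r×n} of rank at most k. Then for every Y ∈ R^{r×n} of rank at most k: ‖A − C X^ξ‖_ξ² = ‖A − (C X^ξ)(C X^ξ)⁺ A‖_ξ² ≤ ‖A − (C Y)(C Y)⁺ A‖_ξ². -/

import Mathlib

open Matrix MeasureTheory

noncomputable def frobSq {m n : Type*} [Fintype m] [Fintype n] (A : Matrix m n ℝ) : ℝ :=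
  ∑ i, ∑ j, A i j ^ 2

noncomputable def spec {m n : Type*} [Fintype m] [Fintype n] [DecidableEq n]
    (A : Matrix m n ℝ) : ℝ :=
  ‖LinearMap.toContinuousLinearMap (Matrix.toEuclideanLin A)‖

noncomputable def specErr {m n : Type*} [Fintype m] [Fintype n] [DecidableEq n]
    (A : Matrix m n ℝ) (k : ℕ) : ℝ :=
  sInf {e : ℝ | ∃ X : Matrix m n ℝ, X.rank ≤ k ∧ e = spec (A - X)}

noncomputable def frobSqErr {m n : Type*} [Fintype m] [Fintype n]
    (A : Matrix m n ℝ) (k : ℕ) : ℝ :=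
  sInf {e : ℝ | ∃ X : Matrix m n ℝ, X.rank ≤ k ∧ e = frobSq (A - X)}

noncomputable def specErrIn {m n r : Type*} [Fintype m] [Fintype n] [DecidableEq n]
    [Fintype r] (A : Matrix m n ℝ) (C : Matrix m r ℝ) (k : ℕ) : ℝ :=
  sInf {e : ℝ | ∃ X : Matrix m n ℝ, X.rank ≤ k ∧
    LinearMap.range X.mulVecLin ≤ LinearMap.range C.mulVecLin ∧ e = spec (A - X)}

noncomputable def frobSqErrIn {m n r : Type*} [Fintype m] [Fintype n] [Fintype r]
    (A : Matrix m n ℝ) (C : Matrix m r ℝ) (k : ℕ) : ℝ :=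
  sInf {e : ℝ | ∃ X : Matrix m n ℝ, X.rank ≤ k ∧
    LinearMap.range X.mulVecLin ≤ LinearMap.range C.mulVecLin ∧ e = frobSq (A - X)}

def IsMoorePenrose {m n : Type*} [Fintype m] [Fintype n]
    (M : Matrix m n ℝ) (P : Matrix n m ℝ) : Prop :=
  M * P * M = M ∧ P * M * P = P ∧ (M * P)ᵀ = M * P ∧ (P * M)ᵀ = P * M

/-!
For `Y` of rank at most `k` and any `P`, `(C Y) P A = C (Y P A)` with `Y P A` of rank at most `k`,
so every projection error `‖A - (C Y)(C Y)⁺ A‖` is the error of an admissible `Ψ` and is at least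
the minimum. Conversely `A - M M⁺ A = (1 - M M⁺)(A - M)`, and the orthogonal projection `1 - M M⁺`
contracts both the spectral and the Frobenius norm, so projecting onto the columns of `C X` does
at least as well as `C X` itself.
-/

open scoped Matrix.Norms.L2Operator

theorem frobSq_eq_trace {m n : Type*} [Fintype m] [Fintype n] (B : Matrix m n ℝ) :
    frobSq B = (Bᵀ * B).trace := by
  simp only [frobSq, Matrix.trace, Matrix.diag, Matrix.mul_apply, Matrix.transpose_apply, sq]
  rw [Finset.sum_comm]

theorem frobSq_nonneg {m n : Type*} [Fintype m] [Fintype n] (B : Matrix m n ℝ) :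
    0 ≤ frobSq B := by
  unfold frobSq; positivity

section StarProjection

variable {m n : Type*} [Fintype m] [Fintype n] {Q : Matrix m m ℝ}

theorem spec_mul_le_of_isStarProjection [DecidableEq m] [DecidableEq n]
    (hQ : IsStarProjection Q) (B : Matrix m n ℝ) : spec (Q * B) ≤ spec B :=
  calc spec (Q * B) = ‖Q * B‖ := rfl
    _ ≤ ‖Q‖ * ‖B‖ := Matrix.l2_opNorm_mul Q B
    _ ≤ spec B := mul_le_of_le_one_left (norm_nonneg B) hQ.norm_le

theorem frobSq_mul_of_isStarProjection (hQ : IsStarProjection Q) (B : Matrix m n ℝ) :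
    frobSq (Q * B) = (Bᵀ * Q * B).trace := by
  have hQt : Qᵀ = Q := by
    simpa [star_eq_conjTranspose, conjTranspose_eq_transpose_of_trivial] using
      hQ.isSelfAdjoint.star_eq
  rw [frobSq_eq_trace, Matrix.transpose_mul, hQt, Matrix.mul_assoc, ← Matrix.mul_assoc Q,
    hQ.isIdempotentElem.eq, Matrix.mul_assoc]

theorem frobSq_mul_le_of_isStarProjection [DecidableEq m] (hQ : IsStarProjection Q)
    (B : Matrix m n ℝ) : frobSq (Q * B) ≤ frobSq B := by
  have hsplit : frobSq (Q * B) + frobSq ((1 - Q) * B) = frobSq B := by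
    rw [frobSq_mul_of_isStarProjection hQ, frobSq_mul_of_isStarProjection hQ.one_sub,
      ← Matrix.trace_add, ← Matrix.add_mul, ← Matrix.mul_add, add_sub_cancel, Matrix.mul_one,
      frobSq_eq_trace]
  linarith [frobSq_nonneg ((1 - Q) * B)]

end StarProjection

namespace IsMoorePenrose

variable {m n : Type*} [Fintype m] [Fintype n] [DecidableEq m] {M : Matrix m n ℝ}
  {P : Matrix n m ℝ}

theorem isStarProjection_one_sub_mul (h : IsMoorePenrose M P) : IsStarProjection (1 - M * P) :=
  IsStarProjection.one_sub
    { isIdempotentElem := by rw [IsIdempotentElem, ← Matrix.mul_assoc, h.1]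
      isSelfAdjoint := by
        rw [IsSelfAdjoint, star_eq_conjTranspose, conjTranspose_eq_transpose_of_trivial, h.2.2.1] }

theorem sub_mul_mul_eq (h : IsMoorePenrose M P) (A : Matrix m n ℝ) :
    A - M * P * A = (1 - M * P) * (A - M) := by
  rw [Matrix.sub_mul, Matrix.mul_sub, Matrix.mul_sub, Matrix.one_mul, Matrix.one_mul, h.1]
  abel

theorem spec_sub_mul_mul_le [DecidableEq n] (h : IsMoorePenrose M P) (A : Matrix m n ℝ) :
    spec (A - M * P * A) ≤ spec (A - M) := by
  rw [h.sub_mul_mul_eq A]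
  exact spec_mul_le_of_isStarProjection h.isStarProjection_one_sub_mul _

theorem frobSq_sub_mul_mul_le (h : IsMoorePenrose M P) (A : Matrix m n ℝ) :
    frobSq (A - M * P * A) ≤ frobSq (A - M) := by
  rw [h.sub_mul_mul_eq A]
  exact frobSq_mul_le_of_isStarProjection h.isStarProjection_one_sub_mul _

end IsMoorePenrose

theorem le_sub_mul_mul_mul_of_minimizes {m n r : Type*} [Fintype m] [Fintype n] [Fintype r]
    {A : Matrix m n ℝ} {C : Matrix m r ℝ} {k : ℕ} {X Y : Matrix r n ℝ}
    {err : Matrix m n ℝ → ℝ} (hmin : ∀ Ψ : Matrix r n ℝ, Ψ.rank ≤ k →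
      err (A - C * X) ≤ err (A - C * Ψ))
    (hY : Y.rank ≤ k) (P : Matrix n m ℝ) : err (A - C * X) ≤ err (A - C * Y * P * A) := by
  have hrank : (Y * P * A).rank ≤ k :=
    ((Matrix.rank_mul_le_left _ _).trans (Matrix.rank_mul_le_left _ _)).trans hY
  simpa only [Matrix.mul_assoc] using hmin _ hrank

theorem best_rank_k_is_projection_general
    {m n r : ℕ} (A : Matrix (Fin m) (Fin n) ℝ) (C : Matrix (Fin m) (Fin r) ℝ)
    (k : ℕ)
    (X2 : Matrix (Fin r) (Fin n) ℝ) (hX2rank : X2.rank ≤ k)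
    (hX2min : ∀ Ψ : Matrix (Fin r) (Fin n) ℝ, Ψ.rank ≤ k →
      spec (A - C * X2) ≤ spec (A - C * Ψ))
    (XF : Matrix (Fin r) (Fin n) ℝ) (hXFrank : XF.rank ≤ k)
    (hXFmin : ∀ Ψ : Matrix (Fin r) (Fin n) ℝ, Ψ.rank ≤ k →
      frobSq (A - C * XF) ≤ frobSq (A - C * Ψ))
    (Y : Matrix (Fin r) (Fin n) ℝ) (hYrank : Y.rank ≤ k)
    (P2 : Matrix (Fin n) (Fin m) ℝ) (hP2 : IsMoorePenrose (C * X2) P2)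
    (PF : Matrix (Fin n) (Fin m) ℝ) (hPF : IsMoorePenrose (C * XF) PF)
    (PY : Matrix (Fin n) (Fin m) ℝ) :
    (spec (A - C * X2) ^ 2 = spec (A - (C * X2) * P2 * A) ^ 2 ∧
      spec (A - C * X2) ^ 2 ≤ spec (A - (C * Y) * PY * A) ^ 2) ∧
    (frobSq (A - C * XF) = frobSq (A - (C * XF) * PF * A) ∧
      frobSq (A - C * XF) ≤ frobSq (A - (C * Y) * PY * A)) := by
  have hX2 : spec (A - C * X2) = spec (A - C * X2 * P2 * A) :=
    (le_sub_mul_mul_mul_of_minimizes hX2min hX2rank P2).antisymm (hP2.spec_sub_mul_mul_le A)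
  have hXF : frobSq (A - C * XF) = frobSq (A - C * XF * PF * A) :=
    (le_sub_mul_mul_mul_of_minimizes hXFmin hXFrank PF).antisymm (hPF.frobSq_sub_mul_mul_le A)
  exact ⟨⟨by rw [hX2],
      pow_le_pow_left₀ (norm_nonneg _) (le_sub_mul_mul_mul_of_minimizes hX2min hYrank PY) 2⟩,
    hXF, le_sub_mul_mul_mul_of_minimizes hXFmin hYrank PY⟩

/-- **`Π^ξ_{C,k}(A)` is a projection of `A`, and no other rank-`k` subspace of the column
space of `C` is better** (Lemma 5.8 of Boutsidis–Drineas–Magdon-Ismail): if `X^ξ` has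
rank at most `k` and minimizes `‖A - C Ψ‖_ξ` over all rank-at-most-`k` matrices `Ψ`,
then `‖A - C X^ξ‖_ξ² = ‖A - (C X^ξ)(C X^ξ)⁺ A‖_ξ² ≤ ‖A - (C Y)(C Y)⁺ A‖_ξ²`
for every `Y` of rank at most `k`; here for `ξ = 2` (spectral norm, minimizer `X2`) and
for `ξ = F` (Frobenius norm, minimizer `XF`). -/
theorem best_rank_k_is_projection
    {m n r : ℕ} (A : Matrix (Fin m) (Fin n) ℝ) (C : Matrix (Fin m) (Fin r) ℝ)
    (k : ℕ) (hk : k < r)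
    (X2 : Matrix (Fin r) (Fin n) ℝ) (hX2rank : X2.rank ≤ k)
    (hX2min : ∀ Ψ : Matrix (Fin r) (Fin n) ℝ, Ψ.rank ≤ k →
      spec (A - C * X2) ≤ spec (A - C * Ψ))
    (XF : Matrix (Fin r) (Fin n) ℝ) (hXFrank : XF.rank ≤ k)
    (hXFmin : ∀ Ψ : Matrix (Fin r) (Fin n) ℝ, Ψ.rank ≤ k →
      frobSq (A - C * XF) ≤ frobSq (A - C * Ψ))
    (Y : Matrix (Fin r) (Fin n) ℝ) (hYrank : Y.rank ≤ k)
    (P2 : Matrix (Fin n) (Fin m) ℝ) (hP2 : IsMoorePenrose (C * X2) P2)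
    (PF : Matrix (Fin n) (Fin m) ℝ) (hPF : IsMoorePenrose (C * XF) PF)
    (PY : Matrix (Fin n) (Fin m) ℝ) (hPY : IsMoorePenrose (C * Y) PY) :
    (spec (A - C * X2) ^ 2 = spec (A - (C * X2) * P2 * A) ^ 2 ∧
      spec (A - C * X2) ^ 2 ≤ spec (A - (C * Y) * PY * A) ^ 2) ∧
    (frobSq (A - C * XF) = frobSq (A - (C * XF) * PF * A) ∧
      frobSq (A - C * XF) ≤ frobSq (A - (C * Y) * PY * A)) :=
  best_rank_k_is_projection_general A C k X2 hX2rank hX2min XF hXFrank hXFmin Y hYrank P2 hP2 PF hPF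
    PY
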